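/- Let a > 0 be a real constant, τ : ℝ → ℝ continuous, θ(s) = ∫₀ˢ τ(u) du, and γ(s) = (s, a·∫₀ˢ (∫₀ᵗ cos θ(u) du) dt, a·∫₀ˢ (∫₀ᵗ sin θ(u) du) dt), with Frenet frame T, N, B. Then T(s) = (1, a·∫₀ˢ cos θ(u) du, a·∫₀ˢ sin θ(u) du), N(s) = (0, cos θ(s), sin θ(s)), B(s) = (0, −sin θ(s), cos θ(s)), and the Smarandache curves of γ are γ_TN(s) = (1, cos θ(s) + a·∫₀ˢ cos θ(u) du, a·∫₀ˢ sin θ(u) du + sin θ(s)), γ_TB(s) = (1, a·∫₀ˢ cos θ(u) du − sin θ(s), cos θ(s) + a·∫₀ˢ sin θ(u) du), and γ_TNB(s) = (1, cos θ(s) + a·∫₀ˢ cos θ(u) du − sin θ(s), cos θ(s) + a·∫₀ˢ sin θ(u) du + sin θ(s)). -/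

import Mathlib

open Real

/-- Galilean curvature of an admissible curve `η(s) = (s, y s, z s)` in `G₃`:
`κ_η(s) = √(y''(s)² + z''(s)²)`. -/
noncomputable def galCurvature (η : ℝ → ℝ × ℝ × ℝ) (s : ℝ) : ℝ :=
  Real.sqrt ((deriv (deriv η) s).2.1 ^ 2 + (deriv (deriv η) s).2.2 ^ 2)

/-- Determinant of three vectors in `ℝ³` (as rows). -/
noncomputable def det3 (u v w : ℝ × ℝ × ℝ) : ℝ :=
  Matrix.det !![u.1, u.2.1, u.2.2; v.1, v.2.1, v.2.2; w.1, w.2.1, w.2.2]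

/-- Galilean torsion: `τ_η(s) = det(η'(s), η''(s), η'''(s)) / κ_η(s)²`. -/
noncomputable def galTorsion (η : ℝ → ℝ × ℝ × ℝ) (s : ℝ) : ℝ :=
  det3 (deriv η s) (deriv (deriv η) s) (deriv (deriv (deriv η)) s) /
    (galCurvature η s) ^ 2

/-- Tangent vector `T(s) = η'(s)`. -/
noncomputable def galTangent (η : ℝ → ℝ × ℝ × ℝ) (s : ℝ) : ℝ × ℝ × ℝ :=
  deriv η s

/-- Principal normal `N(s) = (1/κ_η(s)) • (0, y''(s), z''(s))`. -/
noncomputable def galNormal (η : ℝ → ℝ × ℝ × ℝ) (s : ℝ) : ℝ × ℝ × ℝ :=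
  (galCurvature η s)⁻¹ • ((0 : ℝ), (deriv (deriv η) s).2.1, (deriv (deriv η) s).2.2)

/-- Binormal `B(s) = (1/κ_η(s)) • (0, -z''(s), y''(s))`. -/
noncomputable def galBinormal (η : ℝ → ℝ × ℝ × ℝ) (s : ℝ) : ℝ × ℝ × ℝ :=
  (galCurvature η s)⁻¹ • ((0 : ℝ), -(deriv (deriv η) s).2.2, (deriv (deriv η) s).2.1)

/-- Galilean norm of a vector in `G₃`. -/
noncomputable def galNorm (v : ℝ × ℝ × ℝ) : ℝ :=
  if v.1 ≠ 0 then |v.1| else Real.sqrt (v.2.1 ^ 2 + v.2.2 ^ 2)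

/-- TN-Smarandache curve `η_TN = (T+N)/‖T+N‖_G`. -/
noncomputable def smarTN (η : ℝ → ℝ × ℝ × ℝ) (s : ℝ) : ℝ × ℝ × ℝ :=
  (galNorm (galTangent η s + galNormal η s))⁻¹ • (galTangent η s + galNormal η s)

/-- TB-Smarandache curve `η_TB = (T+B)/‖T+B‖_G`. -/
noncomputable def smarTB (η : ℝ → ℝ × ℝ × ℝ) (s : ℝ) : ℝ × ℝ × ℝ :=
  (galNorm (galTangent η s + galBinormal η s))⁻¹ • (galTangent η s + galBinormal η s)

/-- TNB-Smarandache curve `η_TNB = (T+N+B)/‖T+N+B‖_G`. -/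
noncomputable def smarTNB (η : ℝ → ℝ × ℝ × ℝ) (s : ℝ) : ℝ × ℝ × ℝ :=
  (galNorm (galTangent η s + galNormal η s + galBinormal η s))⁻¹ •
    (galTangent η s + galNormal η s + galBinormal η s)

lemma hasDerivAt_primitive {f : ℝ → ℝ} (hf : Continuous f) (s : ℝ) :
    HasDerivAt (fun t => ∫ u in (0:ℝ)..t, f u) (f s) s :=
  intervalIntegral.integral_hasDerivAt_right (hf.intervalIntegrable _ _)
    (hf.stronglyMeasurableAtFilter _ _) hf.continuousAt

lemma continuous_primitive {f : ℝ → ℝ} (hf : Continuous f) :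
    Continuous (fun t => ∫ u in (0:ℝ)..t, f u) :=
  continuous_iff_continuousAt.2 fun x => (hasDerivAt_primitive hf x).continuousAt

theorem salkowski_frame_and_smarandache
    (a : ℝ) (ha : 0 < a) (τ : ℝ → ℝ) (hτ : Continuous τ)
    (θ : ℝ → ℝ) (hθ : ∀ s, θ s = ∫ u in (0:ℝ)..s, τ u)
    (γ : ℝ → ℝ × ℝ × ℝ)
    (hγ : ∀ s, γ s =
      (s, a * ∫ t in (0:ℝ)..s, ∫ u in (0:ℝ)..t, Real.cos (θ u),
          a * ∫ t in (0:ℝ)..s, ∫ u in (0:ℝ)..t, Real.sin (θ u))) :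
    ∀ s, galTangent γ s =
        (1, a * ∫ u in (0:ℝ)..s, Real.cos (θ u), a * ∫ u in (0:ℝ)..s, Real.sin (θ u)) ∧
      galNormal γ s = (0, Real.cos (θ s), Real.sin (θ s)) ∧
      galBinormal γ s = (0, -Real.sin (θ s), Real.cos (θ s)) ∧
      smarTN γ s =
        (1, Real.cos (θ s) + a * ∫ u in (0:ℝ)..s, Real.cos (θ u),
            (a * ∫ u in (0:ℝ)..s, Real.sin (θ u)) + Real.sin (θ s)) ∧
      smarTB γ s =
        (1, (a * ∫ u in (0:ℝ)..s, Real.cos (θ u)) - Real.sin (θ s),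
            Real.cos (θ s) + a * ∫ u in (0:ℝ)..s, Real.sin (θ u)) ∧
      smarTNB γ s =
        (1, Real.cos (θ s) + (a * ∫ u in (0:ℝ)..s, Real.cos (θ u)) - Real.sin (θ s),
            Real.cos (θ s) + (a * ∫ u in (0:ℝ)..s, Real.sin (θ u)) + Real.sin (θ s)) := by

  intro s
  have hθc : Continuous θ := by
    rw [funext hθ]; exact continuous_primitive hτ
  have hcos : Continuous fun u => Real.cos (θ u) := Real.continuous_cos.comp hθc
  have hsin : Continuous fun u => Real.sin (θ u) := Real.continuous_sin.comp hθc
  set g : ℝ → ℝ := fun t => ∫ u in (0:ℝ)..t, Real.cos (θ u) with hg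
  set h : ℝ → ℝ := fun t => ∫ u in (0:ℝ)..t, Real.sin (θ u) with hh
  have hgc : Continuous g := continuous_primitive hcos
  have hhc : Continuous h := continuous_primitive hsin
  have hd1 : ∀ x, HasDerivAt γ (1, a * g x, a * h x) x := by
    intro x
    rw [funext hγ]
    exact (hasDerivAt_id x).prodMk
      (((hasDerivAt_primitive hgc x).const_mul a).prodMk
        ((hasDerivAt_primitive hhc x).const_mul a))
  have hD1 : deriv γ = fun x => ((1:ℝ), a * g x, a * h x) := funext fun x => (hd1 x).deriv
  have hd2 : ∀ x, HasDerivAt (deriv γ)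
      (0, a * Real.cos (θ x), a * Real.sin (θ x)) x := by
    intro x
    rw [hD1]
    exact (hasDerivAt_const x (1:ℝ)).prodMk
      (((hasDerivAt_primitive hcos x).const_mul a).prodMk
        ((hasDerivAt_primitive hsin x).const_mul a))
  have hD2 : deriv (deriv γ) s = (0, a * Real.cos (θ s), a * Real.sin (θ s)) :=
    (hd2 s).deriv
  have hT : galTangent γ s = (1, a * g s, a * h s) := (hd1 s).deriv
  have hk : galCurvature γ s = a := by
    rw [galCurvature, hD2]
    have : (a * Real.cos (θ s)) ^ 2 + (a * Real.sin (θ s)) ^ 2 = a ^ 2 := by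
      have := Real.sin_sq_add_cos_sq (θ s); nlinarith [this]
    simp only [this]
    exact Real.sqrt_sq ha.le
  have ha' : a ≠ 0 := ha.ne'
  have hN : galNormal γ s = (0, Real.cos (θ s), Real.sin (θ s)) := by
    rw [galNormal, hk, hD2]
    simp only [Prod.smul_mk, smul_eq_mul, mul_zero, mul_neg,
      inv_mul_cancel_left₀ ha']
  have hB : galBinormal γ s = (0, -Real.sin (θ s), Real.cos (θ s)) := by
    rw [galBinormal, hk, hD2]
    simp only [Prod.smul_mk, smul_eq_mul, mul_zero, mul_neg,
      inv_mul_cancel_left₀ ha']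
  refine ⟨hT, hN, hB, ?_, ?_, ?_⟩
  · rw [smarTN, hT, hN]
    simp only [galNorm, Prod.mk_add_mk, hg, hh]
    norm_num [Prod.mk.injEq]
    try constructor
    all_goals ring
  · rw [smarTB, hT, hB]
    simp only [galNorm, Prod.mk_add_mk, hg, hh]
    norm_num [Prod.mk.injEq]
    try constructor
    all_goals ring
  · rw [smarTNB, hT, hN, hB]
    simp only [galNorm, Prod.mk_add_mk, hg, hh]
    norm_num [Prod.mk.injEq]
    try constructor
    all_goals ring
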